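/- Lemma 2.3: With the combinatorial setup (M, ≻, base S): if (i,j) ∈ S and j is not equal to R_k + 1 for any k (i.e., j is not the first index of its block), then there exists ĩ > i with (ĩ, j−1) ∈ S. -/

import Mathlib

/-!
Since `j` is not the first index of its block, `(i, j - 1)` still lies in `M`, and it is not in
`S` because `(i, j) ≻ (i, j - 1)`. So `(i, j - 1)` dominates some `ξ ∈ S`. If `ξ` were in the
same row, `ξ = (i, j'')` with `j''` in the block of `j`, then `(i, j) ≻ ξ` as well, contradicting
that `S` is an antichain; hence `ξ` lies in the same column, `ξ = (ĩ, j - 1)` with `ĩ > i`.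
-/

/-- `i` and `j` lie in the same diagonal block of the composition with partial sums `R`. -/
def SameBlock (R : ℕ → ℕ) (s i j : ℕ) : Prop :=
  ∃ k, 1 ≤ k ∧ k ≤ s ∧ R (k-1) < i ∧ i ≤ R k ∧ R (k-1) < j ∧ j ≤ R k

/-- The set `M` of matrix positions strictly above the block diagonal. -/
def Mset (R : ℕ → ℕ) (s : ℕ) : Set (ℕ × ℕ) :=
  {p | 1 ≤ p.1 ∧ p.1 < p.2 ∧ p.2 ≤ R s ∧ ¬ SameBlock R s p.1 p.2}

/-- The relation `p ≻ q` on `M`. -/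
def Succ (R : ℕ → ℕ) (s : ℕ) (p q : ℕ × ℕ) : Prop :=
  (p.1 = q.1 ∧ q.2 < p.2 ∧ SameBlock R s q.2 p.2) ∨
  (p.2 = q.2 ∧ p.1 < q.1 ∧ SameBlock R s p.1 q.1)

/-- `S` is a base of `M`: an antichain under `≻` such that every element of `M \ S`
dominates some element of `S`. -/
def IsBase (R : ℕ → ℕ) (s : ℕ) (S : Set (ℕ × ℕ)) : Prop :=
  S ⊆ Mset R s ∧
  (∀ p ∈ S, ∀ q ∈ S, p ≠ q → ¬ Succ R s p q ∧ ¬ Succ R s q p) ∧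
  (∀ γ ∈ Mset R s \ S, ∃ ξ ∈ S, Succ R s γ ξ)

section

variable {R : ℕ → ℕ} {s : ℕ}

lemma block_index_unique (hmono : ∀ k < s, R k < R (k + 1)) {k k' a : ℕ}
    (hk : 1 ≤ k) (hks : k ≤ s) (hk' : 1 ≤ k') (hk's : k' ≤ s)
    (ha : R (k - 1) < a ∧ a ≤ R k) (ha' : R (k' - 1) < a ∧ a ≤ R k') : k = k' := by
  have hR : MonotoneOn R (Set.Iic s) := (strictMonoOn_Iic_of_lt_succ hmono).monotoneOn
  by_contra hne
  rcases Nat.lt_or_gt_of_ne hne with hlt | hlt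
  · have := hR (Set.mem_Iic.2 hks) (Set.mem_Iic.2 (by omega : k' - 1 ≤ s)) (by omega)
    omega
  · have := hR (Set.mem_Iic.2 hk's) (Set.mem_Iic.2 (by omega : k - 1 ≤ s)) (by omega)
    omega

lemma SameBlock.trans (hmono : ∀ k < s, R k < R (k + 1)) {a b c : ℕ}
    (hab : SameBlock R s a b) (hbc : SameBlock R s b c) : SameBlock R s a c := by
  obtain ⟨k, hk, hks, ha, ha', hb, hb'⟩ := hab
  obtain ⟨k', hk', hk's, hb₂, hb₂', hc, hc'⟩ := hbc
  obtain rfl := block_index_unique hmono hk hks hk' hk's ⟨hb, hb'⟩ ⟨hb₂, hb₂'⟩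
  exact ⟨k, hk, hks, ha, ha', hc, hc'⟩

lemma SameBlock.of_le_of_le {a b c : ℕ} (hac : SameBlock R s a c) (hab : a ≤ b) (hbc : b ≤ c) :
    SameBlock R s b c := by
  obtain ⟨k, hk, hks, ha, -, -, hc⟩ := hac
  exact ⟨k, hk, hks, by omega, by omega, by omega, hc⟩

lemma exists_block (hR0 : R 0 = 0) {a : ℕ} (ha : 1 ≤ a) (has : a ≤ R s) :
    ∃ k, 1 ≤ k ∧ k ≤ s ∧ R (k - 1) < a ∧ a ≤ R k := by
  have hex : ∃ k, a ≤ R k := ⟨s, has⟩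
  have hk : 1 ≤ Nat.find hex := by
    by_contra h
    have h0 : Nat.find hex = 0 := by omega
    have := Nat.find_spec hex
    rw [h0, hR0] at this
    omega
  exact ⟨Nat.find hex, hk, Nat.find_min' hex has,
    not_le.1 (Nat.find_min hex (by omega)), Nat.find_spec hex⟩

lemma sameBlock_sub_one (hR0 : R 0 = 0) {j : ℕ} (hj : 1 ≤ j) (hjs : j ≤ R s)
    (hne : ∀ k ≤ s, j ≠ R k + 1) : SameBlock R s (j - 1) j := by
  obtain ⟨k, hk, hks, hkj, hjk⟩ := exists_block hR0 hj hjs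
  have := hne (k - 1) (by omega)
  exact ⟨k, hk, hks, by omega, by omega, hkj, hjk⟩

lemma mem_Mset_of_sameBlock (hmono : ∀ k < s, R k < R (k + 1)) {i j j' : ℕ}
    (hij : (i, j) ∈ Mset R s) (hj : SameBlock R s j' j) (hj' : j' ≤ j) : (i, j') ∈ Mset R s := by
  obtain ⟨hi, hlt, hjs, hns⟩ := hij
  refine ⟨hi, ?_, by omega, fun h => hns (h.trans hmono hj)⟩
  by_contra hle
  exact hns (hj.of_le_of_le (by omega) hlt.le)

lemma Succ.ne {p q : ℕ × ℕ} (h : Succ R s p q) : p ≠ q := by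
  rintro rfl
  rcases h with ⟨-, h, -⟩ | ⟨-, h, -⟩ <;> exact lt_irrefl _ h

lemma IsBase.not_succ {S : Set (ℕ × ℕ)} (hS : IsBase R s S) {p q : ℕ × ℕ} (hp : p ∈ S)
    (hq : q ∈ S) : ¬ Succ R s p q :=
  fun h => (hS.2.1 p hp q hq h.ne).1 h

end

theorem lemma_2_3_general (s : ℕ) (R : ℕ → ℕ)
    (hR0 : R 0 = 0) (hmono : ∀ k < s, R k < R (k+1))
    (S : Set (ℕ × ℕ)) (hS : IsBase R s S)
    (i j : ℕ) (hij : (i, j) ∈ S) (hne : ∀ k ≤ s, j ≠ R k + 1) :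
    ∃ i', i < i' ∧ (i', j - 1) ∈ S := by
  have hM : (i, j) ∈ Mset R s := hS.1 hij
  have hj : 1 ≤ j := by have := hM.2.1; omega
  have hjj : SameBlock R s (j - 1) j := sameBlock_sub_one hR0 hj hM.2.2.1 hne
  have hγM : (i, j - 1) ∈ Mset R s := mem_Mset_of_sameBlock hmono hM hjj (by omega)
  have hγS : (i, j - 1) ∉ S := fun h => hS.not_succ hij h (Or.inl ⟨rfl, by omega, hjj⟩)
  obtain ⟨⟨i', j'⟩, hξ, hsucc⟩ := hS.2.2 _ ⟨hγM, hγS⟩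
  rcases hsucc with ⟨rfl, hj', hsb⟩ | ⟨rfl, hi', -⟩
  · exact (hS.not_succ hij hξ (Or.inl ⟨rfl, by omega, hsb.trans hmono hjj⟩)).elim
  · exact ⟨i', hi', hξ⟩

theorem lemma_2_3 (n s : ℕ) (hn : 1 ≤ n) (hs : 1 ≤ s) (R : ℕ → ℕ)
    (hR0 : R 0 = 0) (hmono : ∀ k < s, R k < R (k+1)) (hRs : R s = n)
    (S : Set (ℕ × ℕ)) (hS : IsBase R s S)
    (i j : ℕ) (hij : (i, j) ∈ S) (hne : ∀ k ≤ s, j ≠ R k + 1) :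
    ∃ i', i < i' ∧ (i', j - 1) ∈ S :=
  lemma_2_3_general s R hR0 hmono S hS i j hij hne
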